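/- arXiv:2407.20068 — 2 statements merged into one kernel-verified Lean document; each statement's English description precedes it below -/
import Mathlib

section
/- Let Δ, ε₁, ε₂ > 0 and let c ≥ 1 be a natural number. Define f₁(t) = (ε₁/(2Δ))·exp(−ε₁·|t|/Δ) (the Laplace density with scale Δ/ε₁) and F₂(x) = 1 − exp(−λx) for x ≥ 0, F₂(x) = 0 for x < 0, with rate λ = ε₂/(2cΔ) (the exponential CDF). Let S⊥ and S⊤ be disjoint finite index sets with |S⊤| ≤ c, and let T, q, q' be real-valued functions on S⊥ ∪ S⊤ with |q(i) − q'(i)| ≤ Δ for every i. Then I(q) ≤ exp(ε₁ + ε₂) · I(q'), where for a query function u the SVT output probability is I(u) = ∫_ℝ f₁(t) · ∏_{i∈S⊥} F₂(T(i)+t−u(i)) · ∏_{j∈S⊤} (1 − F₂(T(j)+t−u(j))) dt. -/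
/-!
Shift the threshold noise by `Δ`. Replacing `t` by `t + Δ` in the integrand for `q'` costs a
factor `exp ε₁` in the Laplace density (`|t + Δ| ≤ |t| + Δ`). After the shift every argument
`T i + t - q i` moves up by `Δ + q i - q' i ∈ [0, 2Δ]`: the factors `F₂` only grow, because `F₂` is
monotone, and each survival factor `1 - F₂` shrinks by at most `exp (2λΔ) = exp (ε₂ / c)`, because
`1 - F₂ x = exp (-λ max x 0)`. At most `c` survival factors give `exp ε₂`, and translation
invariance of Lebesgue measure concludes.
-/

open MeasureTheory Real

theorem Finset.prod_le_pow_card_mul_prod {ι R : Type*} [CommMonoidWithZero R] [Preorder R]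
    [ZeroLEOneClass R] [PosMulMono R] {s : Finset ι} {f g : ι → R} {B : R}
    (hf : ∀ i ∈ s, 0 ≤ f i) (h : ∀ i ∈ s, f i ≤ B * g i) :
    ∏ i ∈ s, f i ≤ B ^ s.card * ∏ i ∈ s, g i :=
  calc ∏ i ∈ s, f i ≤ ∏ i ∈ s, B * g i := Finset.prod_le_prod hf h
    _ = B ^ s.card * ∏ i ∈ s, g i := by rw [Finset.prod_mul_distrib, Finset.prod_const]

theorem natCast_mul_div_natCast_le {n c : ℕ} {ε : ℝ} (h : n ≤ c) (hε : 0 ≤ ε) :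
    (n : ℝ) * (ε / c) ≤ ε := by
  rw [mul_div_assoc']
  exact div_le_of_le_mul₀ (Nat.cast_nonneg c) hε (by rw [mul_comm]; gcongr)

theorem integral_le_mul_integral_of_le_comp_add {f g : ℝ → ℝ} {C a : ℝ} (hf : 0 ≤ f)
    (hg : Integrable g) (h : ∀ t, f t ≤ C * g (t + a)) : ∫ t, f t ≤ C * ∫ t, g t :=
  calc ∫ t, f t ≤ ∫ t, C * g (t + a) :=
        integral_mono_of_nonneg (.of_forall hf) ((hg.comp_add_right a).const_mul C) (.of_forall h)
    _ = C * ∫ t, g t := by rw [integral_const_mul, integral_add_right_eq_self g a]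

theorem integrable_exp_neg_mul_abs {b : ℝ} (hb : 0 < b) :
    Integrable fun t : ℝ => exp (-(b * |t|)) := by
  rw [← integrableOn_univ, ← Set.Iic_union_Ioi (a := 0)]
  refine IntegrableOn.union ?_ ?_
  · refine (integrableOn_exp_mul_Iic hb 0).congr_fun (fun t ht => ?_) measurableSet_Iic
    rw [abs_of_nonpos ht, mul_neg, neg_neg]
  · refine (integrableOn_exp_mul_Ioi (neg_neg_of_pos hb) 0).congr_fun (fun t ht => ?_)
      measurableSet_Ioi
    simp only [abs_of_pos (Set.mem_Ioi.1 ht), neg_mul]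

section Laplace

noncomputable def laplacePDF (b t : ℝ) : ℝ := exp (-(|t| / b)) / (2 * b)

theorem laplacePDF_div_eq (Δ ε t : ℝ) :
    laplacePDF (Δ / ε) t = ε / (2 * Δ) * exp (-(ε * |t|) / Δ) := by
  unfold laplacePDF
  rw [div_div_eq_mul_div, mul_div_assoc', div_div_eq_mul_div, neg_div, mul_comm ε]
  ring

variable {b : ℝ}

theorem laplacePDF_nonneg (hb : 0 ≤ b) : 0 ≤ laplacePDF b :=
  fun _ => by unfold laplacePDF; positivity

theorem integrable_laplacePDF (hb : 0 < b) : Integrable (laplacePDF b) := by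
  have h := (integrable_exp_neg_mul_abs (inv_pos.2 hb)).div_const (2 * b)
  unfold laplacePDF
  simpa only [inv_mul_eq_div] using h

theorem laplacePDF_le_exp_mul_laplacePDF_add (hb : 0 < b) (t s : ℝ) :
    laplacePDF b t ≤ exp (|s| / b) * laplacePDF b (t + s) := by
  unfold laplacePDF
  rw [mul_div_assoc', ← exp_add, ← neg_div, ← neg_div, ← add_div]
  gcongr
  linarith [abs_add_le t s]

end Laplace

section Exponential

/-- Written with `max x 0` so that the survival function is the single exponential
`exp (-(r * max x 0))`. -/
noncomputable def expCDF (r x : ℝ) : ℝ := 1 - exp (-(r * max x 0))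

theorem expCDF_eq_ite (r x : ℝ) : expCDF r x = if 0 ≤ x then 1 - exp (-r * x) else 0 := by
  unfold expCDF
  split_ifs with hx
  · rw [max_eq_left hx, neg_mul]
  · rw [max_eq_right (le_of_not_ge hx), mul_zero, neg_zero, exp_zero, sub_self]

variable {r : ℝ}

theorem expCDF_nonneg (hr : 0 ≤ r) : 0 ≤ expCDF r := fun x => by
  have : 0 ≤ r * max x 0 := mul_nonneg hr (le_max_right x 0)
  simpa [expCDF] using this

theorem expCDF_le_one (r : ℝ) : expCDF r ≤ 1 := fun x => by
  show 1 - _ ≤ 1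
  linarith [exp_pos (-(r * max x 0))]

theorem monotone_expCDF (hr : 0 ≤ r) : Monotone (expCDF r) := fun _ _ hxy => by
  unfold expCDF
  gcongr

theorem one_sub_expCDF_le_exp_mul {s u : ℝ} (hr : 0 ≤ r) (hs : 0 ≤ s) (hsu : s ≤ u) (x : ℝ) :
    1 - expCDF r x ≤ exp (r * u) * (1 - expCDF r (x + s)) := by
  unfold expCDF
  rw [sub_sub_cancel, sub_sub_cancel, ← exp_add]
  gcongr
  have : max (x + s) 0 ≤ max x 0 + s := max_le (by gcongr; exact le_max_left _ _) (by positivity)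
  nlinarith

end Exponential

section SVT

variable {ι : Type*}

/-- `t` is the threshold noise with density `f`; the query noise has CDF `F`; the queries in `Sbot`
are answered below the threshold and those in `Stop` above. -/
def svtIntegrand (f F : ℝ → ℝ) (Sbot Stop : Finset ι) (T u : ι → ℝ) (t : ℝ) : ℝ :=
  f t * ((∏ i ∈ Sbot, F (T i + t - u i)) * ∏ j ∈ Stop, (1 - F (T j + t - u j)))

variable {f F : ℝ → ℝ} {Sbot Stop : Finset ι} {T : ι → ℝ}

theorem svtIntegrand_nonneg (hf : 0 ≤ f) (hF₀ : 0 ≤ F) (hF₁ : F ≤ 1) (u : ι → ℝ) :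
    0 ≤ svtIntegrand f F Sbot Stop T u :=
  fun t => mul_nonneg (hf t) <| mul_nonneg (Finset.prod_nonneg fun _ _ => hF₀ _)
    (Finset.prod_nonneg fun _ _ => sub_nonneg.2 (hF₁ _))

theorem svtIntegrand_le (hf : 0 ≤ f) (hF₀ : 0 ≤ F) (hF₁ : F ≤ 1) (u : ι → ℝ) (t : ℝ) :
    svtIntegrand f F Sbot Stop T u t ≤ f t := by
  refine mul_le_of_le_one_right (hf t) (mul_le_one₀ ?_ ?_ ?_)
  · exact Finset.prod_le_one (fun _ _ => hF₀ _) (fun _ _ => hF₁ _)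
  · exact Finset.prod_nonneg fun _ _ => sub_nonneg.2 (hF₁ _)
  · exact Finset.prod_le_one (fun _ _ => sub_nonneg.2 (hF₁ _)) (fun _ _ => sub_le_self _ (hF₀ _))

theorem integrable_svtIntegrand (hfi : Integrable f) (hf : 0 ≤ f) (hF : Measurable F)
    (hF₀ : 0 ≤ F) (hF₁ : F ≤ 1) (u : ι → ℝ) :
    Integrable (svtIntegrand f F Sbot Stop T u) := by
  refine hfi.mono' ?_ (.of_forall fun t => ?_)
  · exact hfi.1.mul (Measurable.aestronglyMeasurable (by fun_prop))
  · rw [Real.norm_of_nonneg (svtIntegrand_nonneg hf hF₀ hF₁ u t)]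
    exact svtIntegrand_le hf hF₀ hF₁ u t

variable {Δ A B : ℝ} {q q' : ι → ℝ}

theorem svtIntegrand_le_mul_svtIntegrand_add {t : ℝ} (hf : 0 ≤ f) (hF₀ : 0 ≤ F) (hF₁ : F ≤ 1)
    (hF : Monotone F) (hft : f t ≤ A * f (t + Δ))
    (hsurv : ∀ x s, 0 ≤ s → s ≤ 2 * Δ → 1 - F x ≤ B * (1 - F (x + s)))
    (hbot : ∀ i ∈ Sbot, |q i - q' i| ≤ Δ) (htop : ∀ j ∈ Stop, |q j - q' j| ≤ Δ) :
    svtIntegrand f F Sbot Stop T q t ≤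
      A * B ^ Stop.card * svtIntegrand f F Sbot Stop T q' (t + Δ) := by
  have hbot' : ∏ i ∈ Sbot, F (T i + t - q i) ≤ ∏ i ∈ Sbot, F (T i + (t + Δ) - q' i) :=
    Finset.prod_le_prod (fun _ _ => hF₀ _) fun i hi => hF <| by
      linarith [(abs_le.1 (hbot i hi)).1]
  have htop' : ∏ j ∈ Stop, (1 - F (T j + t - q j)) ≤
      B ^ Stop.card * ∏ j ∈ Stop, (1 - F (T j + (t + Δ) - q' j)) := by
    refine Finset.prod_le_pow_card_mul_prod (fun _ _ => sub_nonneg.2 (hF₁ _)) fun j hj => ?_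
    obtain ⟨hlo, hhi⟩ := abs_le.1 (htop j hj)
    have := hsurv (T j + t - q j) (Δ + (q j - q' j)) (by linarith) (by linarith)
    rwa [show T j + t - q j + (Δ + (q j - q' j)) = T j + (t + Δ) - q' j by ring] at this
  have htop₀ : 0 ≤ ∏ j ∈ Stop, (1 - F (T j + t - q j)) :=
    Finset.prod_nonneg fun _ _ => sub_nonneg.2 (hF₁ _)
  unfold svtIntegrand
  calc f t * ((∏ i ∈ Sbot, F (T i + t - q i)) * ∏ j ∈ Stop, (1 - F (T j + t - q j)))
      ≤ (A * f (t + Δ)) * ((∏ i ∈ Sbot, F (T i + (t + Δ) - q' i)) *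
          (B ^ Stop.card * ∏ j ∈ Stop, (1 - F (T j + (t + Δ) - q' j)))) := by
        refine mul_le_mul hft (mul_le_mul hbot' htop' htop₀ ?_) ?_ ((hf t).trans hft)
        · exact Finset.prod_nonneg fun _ _ => hF₀ _
        · exact mul_nonneg (Finset.prod_nonneg fun _ _ => hF₀ _) htop₀
    _ = A * B ^ Stop.card * ((f (t + Δ)) * ((∏ i ∈ Sbot, F (T i + (t + Δ) - q' i)) *
          ∏ j ∈ Stop, (1 - F (T j + (t + Δ) - q' j)))) := by ring

theorem integral_svtIntegrand_le (hfi : Integrable f) (hf : 0 ≤ f)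
    (hfA : ∀ t, f t ≤ A * f (t + Δ)) (hF₀ : 0 ≤ F) (hF₁ : F ≤ 1) (hF : Monotone F)
    (hsurv : ∀ x s, 0 ≤ s → s ≤ 2 * Δ → 1 - F x ≤ B * (1 - F (x + s)))
    (hbot : ∀ i ∈ Sbot, |q i - q' i| ≤ Δ) (htop : ∀ j ∈ Stop, |q j - q' j| ≤ Δ) :
    ∫ t, svtIntegrand f F Sbot Stop T q t ≤
      A * B ^ Stop.card * ∫ t, svtIntegrand f F Sbot Stop T q' t :=
  integral_le_mul_integral_of_le_comp_add (svtIntegrand_nonneg hf hF₀ hF₁ q)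
    (integrable_svtIntegrand hfi hf hF.measurable hF₀ hF₁ q') fun _ =>
      svtIntegrand_le_mul_svtIntegrand_add hf hF₀ hF₁ hF (hfA _) hsurv hbot htop

end SVT

theorem svt_exp_privacy_general
    (Δ ε₁ ε₂ : ℝ) (hΔ : 0 < Δ) (hε₁ : 0 < ε₁) (hε₂ : 0 < ε₂)
    (c : ℕ)
    (f₁ F₂ : ℝ → ℝ)
    (hf₁ : ∀ t : ℝ, f₁ t = (ε₁ / (2 * Δ)) * Real.exp (-(ε₁ * |t|) / Δ))
    (hF₂ : ∀ x : ℝ, F₂ x =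
      if 0 ≤ x then 1 - Real.exp (-(ε₂ / (2 * c * Δ)) * x) else 0)
    {ι : Type*} [DecidableEq ι] (Sbot Stop : Finset ι)
    (hcard : Stop.card ≤ c)
    (T q q' : ι → ℝ)
    (hsens : ∀ i ∈ Sbot ∪ Stop, |q i - q' i| ≤ Δ) :
    (∫ t : ℝ, f₁ t * ((∏ i ∈ Sbot, F₂ (T i + t - q i)) *
        ∏ j ∈ Stop, (1 - F₂ (T j + t - q j)))) ≤
      Real.exp (ε₁ + ε₂) *
      (∫ t : ℝ, f₁ t * ((∏ i ∈ Sbot, F₂ (T i + t - q' i)) *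
        ∏ j ∈ Stop, (1 - F₂ (T j + t - q' j)))) := by
  obtain rfl : f₁ = laplacePDF (Δ / ε₁) :=
    funext fun t => (hf₁ t).trans (laplacePDF_div_eq Δ ε₁ t).symm
  obtain rfl : F₂ = expCDF (ε₂ / (2 * c * Δ)) :=
    funext fun x => (hF₂ x).trans (expCDF_eq_ite _ x).symm
  have hb : 0 < Δ / ε₁ := div_pos hΔ hε₁
  have hr : 0 ≤ ε₂ / (2 * c * Δ) := by positivity
  have hlap (t : ℝ) : laplacePDF (Δ / ε₁) t ≤ exp ε₁ * laplacePDF (Δ / ε₁) (t + Δ) := by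
    simpa only [abs_of_pos hΔ, div_div_cancel₀ hΔ.ne']
      using laplacePDF_le_exp_mul_laplacePDF_add hb t Δ
  have hrate : ε₂ / (2 * c * Δ) * (2 * Δ) = ε₂ / c := by
    rw [show 2 * (c : ℝ) * Δ = c * (2 * Δ) by ring, ← div_div, div_mul_cancel₀ _ (by positivity)]
  have hsurv (x s : ℝ) (hs : 0 ≤ s) (hsΔ : s ≤ 2 * Δ) :=
    hrate ▸ one_sub_expCDF_le_exp_mul hr hs hsΔ x
  have hpow : exp (ε₂ / c) ^ Stop.card ≤ exp ε₂ := by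
    rw [← exp_nat_mul, exp_le_exp]
    exact natCast_mul_div_natCast_le hcard hε₂.le
  refine (integral_svtIntegrand_le (integrable_laplacePDF hb) (laplacePDF_nonneg hb.le) hlap
    (expCDF_nonneg hr) (expCDF_le_one _) (monotone_expCDF hr) hsurv
    (fun i hi => hsens i (Finset.mem_union_left _ hi))
    (fun j hj => hsens j (Finset.mem_union_right _ hj))).trans ?_
  rw [exp_add]
  exact mul_le_mul_of_nonneg_right (by gcongr)
    (integral_nonneg (svtIntegrand_nonneg (laplacePDF_nonneg hb.le) (expCDF_nonneg hr)
      (expCDF_le_one _) q'))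

/-- (ε₁+ε₂)-DP guarantee of SVT-Exp (Laplace threshold noise, exponential query noise). -/
theorem svt_exp_privacy
    (Δ ε₁ ε₂ : ℝ) (hΔ : 0 < Δ) (hε₁ : 0 < ε₁) (hε₂ : 0 < ε₂)
    (c : ℕ) (hc : 1 ≤ c)
    (f₁ F₂ : ℝ → ℝ)
    (hf₁ : ∀ t : ℝ, f₁ t = (ε₁ / (2 * Δ)) * Real.exp (-(ε₁ * |t|) / Δ))
    (hF₂ : ∀ x : ℝ, F₂ x =
      if 0 ≤ x then 1 - Real.exp (-(ε₂ / (2 * c * Δ)) * x) else 0)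
    {ι : Type*} [DecidableEq ι] (Sbot Stop : Finset ι) (hdisj : Disjoint Sbot Stop)
    (hcard : Stop.card ≤ c)
    (T q q' : ι → ℝ)
    (hsens : ∀ i ∈ Sbot ∪ Stop, |q i - q' i| ≤ Δ) :
    (∫ t : ℝ, f₁ t * ((∏ i ∈ Sbot, F₂ (T i + t - q i)) *
        ∏ j ∈ Stop, (1 - F₂ (T j + t - q j)))) ≤
      Real.exp (ε₁ + ε₂) *
      (∫ t : ℝ, f₁ t * ((∏ i ∈ Sbot, F₂ (T i + t - q' i)) *
        ∏ j ∈ Stop, (1 - F₂ (T j + t - q' j)))) :=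
  svt_exp_privacy_general Δ ε₁ ε₂ hΔ hε₁ hε₂ c f₁ F₂ hf₁ hF₂ Sbot Stop hcard T q q' hsens
end

section
/- Let Δ, ε > 0 and c > 0, and define V(w) = 2·((w+1)·Δ/ε)² + 2·(2c·(w+1)·Δ/(w·ε))² for w > 0. Then for every w > 0: V(w) ≥ V((2c)^{2/3}); that is, V is minimized over (0, ∞) at w = (2c)^{2/3}. -/
open Real

/-! Up to the factor `2 (Δ/ε)²`, `V w = (w + 1)² (1 + t³ / w²)` with `t³ = (2c)²`. Clearing the
denominator, `(w + 1)² (w² + t³) - w² (t + 1)³ = (w - t)² (w² + (2 + 2t) w + t)`, which is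
nonnegative for `w, t ≥ 0` and vanishes at `w = t = (2c)^(2/3)`. -/

lemma sq_mul_add_one_pow_three_le {t w : ℝ} (ht : 0 ≤ t) (hw : 0 ≤ w) :
    w ^ 2 * (t + 1) ^ 3 ≤ (w + 1) ^ 2 * (w ^ 2 + t ^ 3) := by
  have h : (w + 1) ^ 2 * (w ^ 2 + t ^ 3) - w ^ 2 * (t + 1) ^ 3
      = (w - t) ^ 2 * (w ^ 2 + (2 + 2 * t) * w + t) := by ring
  rw [← sub_nonneg, h]
  positivity

lemma add_one_sq_mul_one_add_pow_three_div_sq_le {t w : ℝ} (ht : 0 ≤ t) (hw : 0 < w) :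
    (t + 1) ^ 2 * (1 + t ^ 3 / t ^ 2) ≤ (w + 1) ^ 2 * (1 + t ^ 3 / w ^ 2) := by
  have hmin : (t + 1) ^ 2 * (1 + t ^ 3 / t ^ 2) = (t + 1) ^ 3 := by
    rcases ht.eq_or_lt with rfl | htpos
    · norm_num
    · field_simp
      ring
  have hw2 : 0 < w ^ 2 := by positivity
  calc (t + 1) ^ 2 * (1 + t ^ 3 / t ^ 2) = (t + 1) ^ 3 := hmin
    _ ≤ (w + 1) ^ 2 * (w ^ 2 + t ^ 3) / w ^ 2 := by
      rw [le_div_iff₀ hw2, mul_comm]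
      exact sq_mul_add_one_pow_three_le ht hw.le
    _ = (w + 1) ^ 2 * (1 + t ^ 3 / w ^ 2) := by
      field_simp

lemma svt_lap_variance_eq (Δ ε b u : ℝ) :
    2 * ((u + 1) * Δ / ε) ^ 2 + 2 * (b * (u + 1) * Δ / (u * ε)) ^ 2
      = 2 * (Δ / ε) ^ 2 * ((u + 1) ^ 2 * (1 + b ^ 2 / u ^ 2)) := by
  ring

lemma rpow_two_div_three_pow_three {x : ℝ} (hx : 0 ≤ x) :
    (x ^ ((2 : ℝ) / 3)) ^ 3 = x ^ 2 := by
  rw [← rpow_natCast (x ^ ((2 : ℝ) / 3)) 3, ← rpow_mul hx]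
  norm_num

theorem svt_lap_allocation_min_general
    (Δ ε c : ℝ) (hc : 0 < c)
    (V : ℝ → ℝ)
    (hV : ∀ w : ℝ, V w =
      2 * ((w + 1) * Δ / ε) ^ 2 + 2 * (2 * c * (w + 1) * Δ / (w * ε)) ^ 2)
    (w : ℝ) (hw : 0 < w) :
    V ((2 * c) ^ ((2 : ℝ) / 3)) ≤ V w := by
  have h2c : 0 ≤ 2 * c := by positivity
  set t := (2 * c) ^ ((2 : ℝ) / 3)
  have ht3 : (2 * c) ^ 2 = t ^ 3 := (rpow_two_div_three_pow_three h2c).symm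
  have hVt : ∀ u, V u = 2 * (Δ / ε) ^ 2 * ((u + 1) ^ 2 * (1 + t ^ 3 / u ^ 2)) := fun u => by
    rw [hV, svt_lap_variance_eq, ht3]
  rw [hVt, hVt]
  exact mul_le_mul_of_nonneg_left
    (add_one_sq_mul_one_add_pow_three_div_sq_le (by positivity) hw) (by positivity)

/-- Optimal privacy-budget allocation for SVT-Lap:
V(w) = 2((w+1)Δ/ε)² + 2(2c(w+1)Δ/(wε))² is minimized at w = (2c)^(2/3). -/
theorem svt_lap_allocation_min
    (Δ ε c : ℝ) (hΔ : 0 < Δ) (hε : 0 < ε) (hc : 0 < c)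
    (V : ℝ → ℝ)
    (hV : ∀ w : ℝ, V w =
      2 * ((w + 1) * Δ / ε) ^ 2 + 2 * (2 * c * (w + 1) * Δ / (w * ε)) ^ 2)
    (w : ℝ) (hw : 0 < w) :
    V ((2 * c) ^ ((2 : ℝ) / 3)) ≤ V w :=
  svt_lap_allocation_min_general Δ ε c hc V hV w hw
end
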